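/- For every Gδ subset B of the orbit space Orb(X), the image ψ(B) is a Gδ subset of Qorb(X) and ψ⁻¹(ψ(B)) = B; conversely, for every Gδ subset C of Qorb(X), the preimage ψ⁻¹(C) is a Gδ subset of Orb(X) and ψ(ψ⁻¹(C)) = C. Thus ψ induces a bijection between the Gδ subsets of Orb(X) and the Gδ subsets of Qorb(X). -/
import Mathlib


open MulAction MeasureTheory

/-- The quasi-orbit equivalence relation: `x ~ y` iff `closure (G • x) = closure (G • y)`. -/
def quasiOrbitSetoid (G X : Type*) [Group G] [MulAction G X] [TopologicalSpace X] :
    Setoid X where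
  r x y := closure (orbit G x) = closure (orbit G y)
  iseqv := ⟨fun _ => rfl, Eq.symm, Eq.trans⟩

/-- The canonical map `ψ : Orb(X) → Qorb(X)` from the orbit space to the quasi-orbit
space, sending an orbit to its quasi-orbit. -/
def quasiOrbitMap (G X : Type*) [Group G] [MulAction G X] [TopologicalSpace X] :
    Quotient (orbitRel G X) → Quotient (quasiOrbitSetoid G X) :=
  Quotient.lift (fun x => Quotient.mk (quasiOrbitSetoid G X) x)
    (fun x y h => Quotient.sound (by
      show closure (orbit G x) = closure (orbit G y)
      rw [orbit_eq_iff.mpr h]))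

section Aux

variable {G X : Type*} [Group G] [MulAction G X] [TopologicalSpace X]

lemma quasiOrbitMap_surjective : Function.Surjective (quasiOrbitMap G X) := by
  intro c
  induction c using Quotient.inductionOn with
  | h x => exact ⟨Quotient.mk (orbitRel G X) x, rfl⟩

lemma quasiOrbitMap_continuous : Continuous (quasiOrbitMap G X) := by
  apply continuous_quot_lift
  exact continuous_quotient_mk'

/-- Open sets of the orbit space are saturated for the quasi-orbit relation. -/
lemma saturated_of_isOpen {U : Set (Quotient (orbitRel G X))} (hU : IsOpen U) :
    quasiOrbitMap G X ⁻¹' (quasiOrbitMap G X '' U) = U := by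
  apply Set.Subset.antisymm _ (Set.subset_preimage_image _ _)
  rintro b hb
  obtain ⟨b', hb'U, hψ⟩ := hb
  induction b using Quotient.inductionOn with
  | h x =>
  induction b' using Quotient.inductionOn with
  | h y =>
  have hcl : closure (orbit G y) = closure (orbit G x) := Quotient.exact hψ
  -- the invariant open set in X
  set V : Set X := Quotient.mk (orbitRel G X) ⁻¹' U with hV
  have hVopen : IsOpen V := hU.preimage continuous_quotient_mk'
  have hyV : y ∈ V := hb'U
  -- y ∈ closure (orbit G x)
  have hy : y ∈ closure (orbit G x) := by
    rw [← hcl]; exact subset_closure (mem_orbit_self y)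
  -- V meets orbit G x
  obtain ⟨z, hzV, hzorb⟩ := mem_closure_iff.mp hy V hVopen hyV
  obtain ⟨g, rfl⟩ := hzorb
  -- g • x ∈ V, and V is invariant
  have : Quotient.mk (orbitRel G X) (g • x) = Quotient.mk (orbitRel G X) x :=
    Quotient.sound ⟨g, rfl⟩
  show Quotient.mk (orbitRel G X) x ∈ U
  rw [← this]
  exact hzV

lemma isOpen_image_of_isOpen {U : Set (Quotient (orbitRel G X))} (hU : IsOpen U) :
    IsOpen (quasiOrbitMap G X '' U) := by
  rw [← (isQuotientMap_quotient_mk' (s := quasiOrbitSetoid G X)).isOpen_preimage]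
  show IsOpen (Quotient.mk (quasiOrbitSetoid G X) ⁻¹' (quasiOrbitMap G X '' U))
  have : Quotient.mk (quasiOrbitSetoid G X) ⁻¹' (quasiOrbitMap G X '' U)
      = Quotient.mk (orbitRel G X) ⁻¹' (quasiOrbitMap G X ⁻¹' (quasiOrbitMap G X '' U)) := rfl
  rw [this, saturated_of_isOpen hU]
  exact hU.preimage continuous_quotient_mk'

end Aux

/-- `ψ` gives a bijective correspondence between the Gδ subsets of the orbit space
`Orb(X)` and the Gδ subsets of the quasi-orbit space `Qorb(X)`: the image of a Gδ set
is a Gδ set and is saturated, and the inverse correspondence is `C ↦ ψ⁻¹(C)`. -/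
theorem gdelta_bijection_orbit_quasiOrbit {G X : Type*} [Group G] [MulAction G X]
    [TopologicalSpace X] (hcont : ∀ t : G, Continuous fun x : X => t • x) :
    (∀ B : Set (Quotient (orbitRel G X)), IsGδ B →
        IsGδ (quasiOrbitMap G X '' B) ∧
          quasiOrbitMap G X ⁻¹' (quasiOrbitMap G X '' B) = B) ∧
    (∀ C : Set (Quotient (quasiOrbitSetoid G X)), IsGδ C →
        IsGδ (quasiOrbitMap G X ⁻¹' C) ∧
          quasiOrbitMap G X '' (quasiOrbitMap G X ⁻¹' C) = C) := by
  constructor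
  · intro B hB
    obtain ⟨T, hTopen, hTcount, rfl⟩ := hB
    have key : quasiOrbitMap G X '' ⋂₀ T = ⋂₀ ((fun t => quasiOrbitMap G X '' t) '' T) := by
      ext c
      constructor
      · rintro ⟨b, hb, rfl⟩ s ⟨t, htT, rfl⟩
        exact ⟨b, hb t htT, rfl⟩
      · intro hc
        obtain ⟨b, rfl⟩ := quasiOrbitMap_surjective c
        refine ⟨b, ?_, rfl⟩
        intro t htT
        have : b ∈ quasiOrbitMap G X ⁻¹' (quasiOrbitMap G X '' t) :=
          hc _ ⟨t, htT, rfl⟩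
        rwa [saturated_of_isOpen (hTopen t htT)] at this
    have hsat : quasiOrbitMap G X ⁻¹' (quasiOrbitMap G X '' ⋂₀ T) = ⋂₀ T := by
      apply Set.Subset.antisymm _ (Set.subset_preimage_image _ _)
      intro b hb t htT
      rw [key] at hb
      have : quasiOrbitMap G X b ∈ quasiOrbitMap G X '' t := hb _ ⟨t, htT, rfl⟩
      rwa [← saturated_of_isOpen (hTopen t htT)]
    refine ⟨?_, hsat⟩
    rw [key]
    refine ⟨_, ?_, hTcount.image _, rfl⟩
    rintro s ⟨t, htT, rfl⟩
    exact isOpen_image_of_isOpen (hTopen t htT)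
  · intro C hC
    refine ⟨?_, Set.image_preimage_eq C quasiOrbitMap_surjective⟩
    obtain ⟨T, hTopen, hTcount, rfl⟩ := hC
    rw [Set.preimage_sInter]
    exact IsGδ.biInter hTcount fun t htT =>
      ((hTopen t htT).preimage quasiOrbitMap_continuous).isGδ
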